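/- arXiv:1803.09229 — 3 statements merged into one kernel-verified Lean document; each statement's English description precedes it below -/
import Mathlib

section
/- Let a, b be integers with |a| ≥ 2 and |b| ≥ 2, and let A = [[1, a], [0, 1]] and B = [[1, 0], [b, 1]] in SL₂(ℤ). There exists a constant C > 0 such that for every prime p and every non-identity element w of the free group on two generators whose reduced word length is at most C · log p, the image of w under the homomorphism to SL₂(ZMod p) sending the two generators to the mod-p reductions A_p and B_p is not the identity. (Equivalently, the girth of the Cayley graph of ⟨A_p, B_p⟩ with respect to {A_p, B_p} is at least C · log p.) -/
/-!
For `|a|, |b| ≥ 2` the matrices `A` and `B` play ping-pong on `ℤ²` with the sets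
`{|x| > |y|}` and `{|x| < |y|}` (every nonzero power `A ^ n = [[1, n a], [0, 1]]` pushes the second
set into the first, and `B ^ n` the other way), so they generate a free group and a nontrivial
word `w` evaluates to an integer matrix `g ≠ 1`. In the `ℓ^∞` operator norm each letter has norm
at most `1 + |a| + |b|`, so `‖g - 1‖ ≤ (2 + |a| + |b|) ^ |w|`. If `w(A_p, B_p) = 1` then `p` divides
every entry of the nonzero integer matrix `g - 1`, whence `p ≤ (2 + |a| + |b|) ^ |w|`, i.e.
`|w| ≥ log p / log (2 + |a| + |b|)`.
-/

/-- `A = [[1, a], [0, 1]]` as an element of `SL₂(ℤ)`. -/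
def A2 (a : ℤ) : Matrix.SpecialLinearGroup (Fin 2) ℤ :=
  ⟨!![1, a; 0, 1], by simp [Matrix.det_fin_two_of]⟩

/-- `B = [[1, 0], [b, 1]]` as an element of `SL₂(ℤ)`. -/
def B2 (b : ℤ) : Matrix.SpecialLinearGroup (Fin 2) ℤ :=
  ⟨!![1, 0; b, 1], by simp [Matrix.det_fin_two_of]⟩

/-- Entrywise reduction modulo `p`, as a group homomorphism `SL₂(ℤ) →* SL₂(ZMod p)`. -/
def modp2 (p : ℕ) :
    Matrix.SpecialLinearGroup (Fin 2) ℤ →* Matrix.SpecialLinearGroup (Fin 2) (ZMod p) :=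
  Matrix.SpecialLinearGroup.map (Int.castRingHom (ZMod p))

open Matrix
open scoped Function Pointwise NNReal

theorem FreeGroup.injective_lift_of_ping_pong_zpow {ι G α : Type*} [Nontrivial ι] [Group G]
    [MulAction G α] (g : ι → G) (X : ι → Set α) (hX : ∀ i, (X i).Nonempty)
    (hdisj : Pairwise (Disjoint on X))
    (hpp : Pairwise fun i j => ∀ n : ℤ, n ≠ 0 → g i ^ n • X j ⊆ X i) :
    Function.Injective (FreeGroup.lift g) := by
  have hlift : FreeGroup.lift g = (Monoid.CoprodI.lift fun i => FreeGroup.lift fun _ => g i).comp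
      (freeGroupEquivCoprodI (ι := ι)).toMonoidHom := by
    ext i; simp
  rw [hlift, MonoidHom.coe_comp]
  refine Function.Injective.comp ?_ freeGroupEquivCoprodI.injective
  -- ping-pong for free products needs a factor with three elements: `FreeGroup Unit` is infinite
  refine Monoid.CoprodI.lift_injective_of_ping_pong _
    (Or.inr ⟨Classical.arbitrary ι, (Cardinal.natCast_lt_aleph0 (n := 3)).le.trans
      (Cardinal.infinite_iff.mp inferInstance)⟩) X hX hdisj fun i j hij h hh => ?_
  obtain ⟨n, rfl⟩ : ∃ n : ℤ, FreeGroup.of () ^ n = h :=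
    ⟨_, FreeGroup.freeGroupUnitEquivInt.symm_apply_apply h⟩
  have hn : n ≠ 0 := by rintro rfl; exact hh (zpow_zero _)
  simpa using hpp hij n hn

theorem FreeGroup.nnnorm_map_lift_le {ι G R : Type*} [DecidableEq ι] [Group G] [SeminormedRing R]
    [NormOneClass R] (φ : G →* R) (g : ι → G) {K : ℝ≥0} (hg : ∀ i, ‖φ (g i)‖₊ ≤ K)
    (hg_inv : ∀ i, ‖φ (g i)⁻¹‖₊ ≤ K) (w : FreeGroup ι) :
    ‖φ (FreeGroup.lift g w)‖₊ ≤ K ^ w.toWord.length := by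
  rw [← FreeGroup.mk_toWord (x := w), FreeGroup.lift_mk, map_list_prod, FreeGroup.toWord_mk,
    FreeGroup.reduce_toWord]
  refine (List.nnnorm_prod_le _).trans ?_
  refine (List.prod_le_pow_card _ K ?_).trans_eq (by simp)
  simp only [List.map_map, List.mem_map, Function.comp_apply]
  rintro _ ⟨⟨i, _ | _⟩, -, rfl⟩
  exacts [hg_inv i, hg i]

@[simp] lemma coe_A2 (a : ℤ) : (A2 a : Matrix (Fin 2) (Fin 2) ℤ) = !![1, a; 0, 1] := rfl
@[simp] lemma coe_B2 (b : ℤ) : (B2 b : Matrix (Fin 2) (Fin 2) ℤ) = !![1, 0; b, 1] := rfl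

lemma A2_add (a a' : ℤ) : A2 (a + a') = A2 a * A2 a' := by
  ext : 1; simp [add_comm]

lemma B2_add (b b' : ℤ) : B2 (b + b') = B2 b * B2 b' := by
  ext : 1; simp

lemma A2_zero : A2 0 = 1 := by
  ext : 1; simp [one_fin_two]

lemma B2_zero : B2 0 = 1 := by
  ext : 1; simp [one_fin_two]

lemma A2_zpow (a n : ℤ) : A2 a ^ n = A2 (n * a) := by
  induction n using Int.induction_on with
  | zero => simp [A2_zero]
  | succ n ih => rw [_root_.zpow_add_one, ih, ← A2_add]; ring_nf
  | pred n ih => rw [_root_.zpow_sub_one, ih, mul_inv_eq_iff_eq_mul, ← A2_add]; ring_nf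

lemma B2_zpow (b n : ℤ) : B2 b ^ n = B2 (n * b) := by
  induction n using Int.induction_on with
  | zero => simp [B2_zero]
  | succ n ih => rw [_root_.zpow_add_one, ih, ← B2_add]; ring_nf
  | pred n ih => rw [_root_.zpow_sub_one, ih, mul_inv_eq_iff_eq_mul, ← B2_add]; ring_nf

lemma A2_inv (a : ℤ) : (A2 a)⁻¹ = A2 (-a) := by simpa using A2_zpow a (-1)

lemma B2_inv (b : ℤ) : (B2 b)⁻¹ = B2 (-b) := by simpa using B2_zpow b (-1)

lemma A2_smul (a : ℤ) (v : Fin 2 → ℤ) : A2 a • v = ![v 0 + a * v 1, v 1] := by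
  change (_ : Matrix (Fin 2) (Fin 2) ℤ) *ᵥ v = _
  ext i; fin_cases i <;> simp [mulVec, dotProduct]

lemma B2_smul (b : ℤ) (v : Fin 2 → ℤ) : B2 b • v = ![v 0, b * v 0 + v 1] := by
  change (_ : Matrix (Fin 2) (Fin 2) ℤ) *ᵥ v = _
  ext i; fin_cases i <;> simp [mulVec, dotProduct]

lemma abs_lt_abs_add_mul {R : Type*} [CommRing R] [LinearOrder R] [IsStrictOrderedRing R]
    {c x y : R} (hc : 2 ≤ |c|) (h : |x| < |y|) : |y| < |x + c * y| := by
  have hcy : 2 * |y| ≤ |c * y| := by rw [abs_mul]; gcongr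
  have htri : |c * y| ≤ |x + c * y| + |x| := by simpa using abs_sub (x + c * y) x
  linarith

lemma Int.abs_le_abs_mul_of_ne_zero {n : ℤ} (hn : n ≠ 0) (c : ℤ) : |c| ≤ |n * c| := by
  rw [abs_mul]
  exact le_mul_of_one_le_left (abs_nonneg c) (Int.one_le_abs hn)

theorem injective_lift_A2_B2 {a b : ℤ} (ha : 2 ≤ |a|) (hb : 2 ≤ |b|) :
    Function.Injective (FreeGroup.lift ![A2 a, B2 b]) := by
  refine FreeGroup.injective_lift_of_ping_pong_zpow _
    ![{v : Fin 2 → ℤ | |v 1| < |v 0|}, {v | |v 0| < |v 1|}] (fun i => ?_) (fun i j hij => ?_)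
    (fun i j hij n hn => ?_)
  · fin_cases i
    exacts [⟨![1, 0], by simp⟩, ⟨![0, 1], by simp⟩]
  · have hdisj : Disjoint {v : Fin 2 → ℤ | |v 1| < |v 0|} {v | |v 0| < |v 1|} :=
      Set.disjoint_left.2 fun v (h : |v 1| < |v 0|) h' => h.asymm h'
    fin_cases i <;> fin_cases j
    exacts [absurd rfl hij, hdisj, hdisj.symm, absurd rfl hij]
  · fin_cases i <;> fin_cases j
    · exact absurd rfl hij
    · rintro _ ⟨v, hv, rfl⟩
      have hna : 2 ≤ |n * a| := ha.trans (Int.abs_le_abs_mul_of_ne_zero hn a)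
      simpa [A2_zpow, A2_smul] using abs_lt_abs_add_mul hna hv
    · rintro _ ⟨v, hv, rfl⟩
      have hnb : 2 ≤ |n * b| := hb.trans (Int.abs_le_abs_mul_of_ne_zero hn b)
      simpa [B2_zpow, B2_smul, add_comm] using abs_lt_abs_add_mul hnb hv
    · exact absurd rfl hij

section LinftyOpNorm

attribute [local instance] Matrix.linftyOpNormedAddCommGroup Matrix.linftyOpNormedRing

theorem Matrix.nnnorm_entry_le_linfty_opNNNorm {m n α : Type*} [Fintype m] [Fintype n]
    [NormedAddCommGroup α] (A : Matrix m n α) (i : m) (j : n) : ‖A i j‖₊ ≤ ‖A‖₊ := by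
  rw [linfty_opNNNorm_def]
  exact (Finset.single_le_sum (fun _ _ => zero_le) (Finset.mem_univ j)).trans
    (Finset.le_sup (f := fun i => ∑ j, ‖A i j‖₊) (Finset.mem_univ i))

theorem Matrix.natCast_le_nnnorm_of_map_intCast_eq_zero {m n : Type*} [Fintype m] [Fintype n]
    {p : ℕ} {M : Matrix m n ℤ} (hM : M ≠ 0) (hp : M.map (Int.cast : ℤ → ZMod p) = 0) :
    (p : ℝ≥0) ≤ ‖M‖₊ := by
  obtain ⟨i, j, hij⟩ : ∃ i j, M i j ≠ 0 := by
    by_contra! h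
    exact hM (Matrix.ext h)
  have hdvd : (p : ℤ) ∣ M i j := (ZMod.intCast_zmod_eq_zero_iff_dvd _ _).1 (congrFun₂ hp i j)
  have hle : (p : ℤ) ≤ |M i j| := Int.le_of_dvd (abs_pos.2 hij) ((dvd_abs _ _).2 hdvd)
  refine le_trans ?_ (nnnorm_entry_le_linfty_opNNNorm M i j)
  rw [← NNReal.coe_le_coe, coe_nnnorm, Int.norm_eq_abs, ← Int.cast_abs]
  push_cast
  exact_mod_cast hle

lemma nnnorm_coe_A2_le (a : ℤ) : ‖(A2 a : Matrix (Fin 2) (Fin 2) ℤ)‖₊ ≤ 1 + ‖a‖₊ := by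
  rw [linfty_opNNNorm_def, Finset.sup_le_iff]
  intro i _
  fin_cases i <;> simp [Fin.sum_univ_two]

lemma nnnorm_coe_B2_le (b : ℤ) : ‖(B2 b : Matrix (Fin 2) (Fin 2) ℤ)‖₊ ≤ 1 + ‖b‖₊ := by
  rw [linfty_opNNNorm_def, Finset.sup_le_iff]
  intro i _
  fin_cases i <;> simp [Fin.sum_univ_two, add_comm]

theorem natCast_le_nnnorm_sub_one_of_modp2_eq_one {p : ℕ} {g : SpecialLinearGroup (Fin 2) ℤ}
    (hg : g ≠ 1) (hg_modp : modp2 p g = 1) :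
    (p : ℝ≥0) ≤ ‖(g : Matrix (Fin 2) (Fin 2) ℤ) - 1‖₊ := by
  refine natCast_le_nnnorm_of_map_intCast_eq_zero (sub_ne_zero.2 fun h => hg (Subtype.ext h)) ?_
  have hg_map : (g : Matrix (Fin 2) (Fin 2) ℤ).map (Int.cast : ℤ → ZMod p) = 1 :=
    congrArg Subtype.val hg_modp
  simp [Matrix.map_sub, hg_map]

theorem nnnorm_coe_lift_A2_B2_le (a b : ℤ) (w : FreeGroup (Fin 2)) :
    ‖(FreeGroup.lift ![A2 a, B2 b] w : Matrix (Fin 2) (Fin 2) ℤ)‖₊ ≤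
      (1 + ‖a‖₊ + ‖b‖₊) ^ w.toWord.length := by
  have hA : 1 + ‖a‖₊ ≤ 1 + ‖a‖₊ + ‖b‖₊ := le_self_add
  have hB : 1 + ‖b‖₊ ≤ 1 + ‖a‖₊ + ‖b‖₊ := by rw [add_right_comm]; exact le_self_add
  refine FreeGroup.nnnorm_map_lift_le (SpecialLinearGroup.coeMonoidHom (ι := Fin 2) (R := ℤ)) _
    (fun i => ?_) (fun i => ?_) w
  all_goals fin_cases i
  · exact (nnnorm_coe_A2_le a).trans hA
  · exact (nnnorm_coe_B2_le b).trans hB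
  · simpa [A2_inv] using (nnnorm_coe_A2_le (-a)).trans (by rwa [nnnorm_neg])
  · simpa [B2_inv] using (nnnorm_coe_B2_le (-b)).trans (by rwa [nnnorm_neg])

theorem natCast_le_pow_of_lift_modp2_eq_one {a b : ℤ} (ha : 2 ≤ |a|) (hb : 2 ≤ |b|) {p : ℕ}
    {w : FreeGroup (Fin 2)} (hw : w ≠ 1)
    (hw_modp : FreeGroup.lift ![modp2 p (A2 a), modp2 p (B2 b)] w = 1) :
    (p : ℝ≥0) ≤ (2 + ‖a‖₊ + ‖b‖₊) ^ w.toWord.length := by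
  set g := FreeGroup.lift ![A2 a, B2 b] w
  have hg : g ≠ 1 := by simpa using (injective_lift_A2_B2 ha hb).ne hw
  have hg_modp : modp2 p g = 1 := by
    rw [← hw_modp, ← MonoidHom.comp_apply]
    exact FreeGroup.lift_unique _ fun i => by fin_cases i <;> simp
  have hn : w.toWord.length ≠ 0 := by simpa [FreeGroup.toWord_eq_nil_iff] using hw
  calc (p : ℝ≥0) ≤ ‖(g : Matrix (Fin 2) (Fin 2) ℤ) - 1‖₊ :=
        natCast_le_nnnorm_sub_one_of_modp2_eq_one hg hg_modp
    _ ≤ ‖(g : Matrix (Fin 2) (Fin 2) ℤ)‖₊ + 1 ^ w.toWord.length := by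
      simpa using nnnorm_sub_le _ (1 : Matrix (Fin 2) (Fin 2) ℤ)
    _ ≤ (1 + ‖a‖₊ + ‖b‖₊) ^ w.toWord.length + 1 ^ w.toWord.length := by
      gcongr
      exact nnnorm_coe_lift_A2_B2_le a b w
    _ ≤ (2 + ‖a‖₊ + ‖b‖₊) ^ w.toWord.length := by
      refine (pow_add_pow_le zero_le zero_le hn).trans_eq ?_
      ring_nf

end LinftyOpNorm

/-- there is a constant `C > 0` such that for every prime `p`, every nontrivial
element of the free group on two generators of reduced word length at most `C · log p` has
nontrivial image under the homomorphism sending the generators to the mod-`p` reductions of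
`A = [[1, a], [0, 1]]` and `B = [[1, 0], [b, 1]]`; i.e. the girth of the Cayley graph of
`⟨A_p, B_p⟩` with respect to `{A_p, B_p}` is at least `C · log p`. -/
theorem sl2_girth (a b : ℤ) (ha : 2 ≤ |a|) (hb : 2 ≤ |b|) :
    ∃ C : ℝ, 0 < C ∧ ∀ p : ℕ, p.Prime →
      ∀ w : FreeGroup (Fin 2), w ≠ 1 →
        ((FreeGroup.toWord w).length : ℝ) ≤ C * Real.log p →
        FreeGroup.lift ![modp2 p (A2 a), modp2 p (B2 b)] w ≠ 1 := by
  set R : ℝ≥0 := 2 + ‖a‖₊ + ‖b‖₊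
  have hlog_R : 0 < Real.log R := Real.log_pos <| by
    have := norm_nonneg a; have := norm_nonneg b; push_cast [R]; linarith
  refine ⟨1 / (2 * Real.log R), by positivity, fun p hp w hw hlen hw_modp => ?_⟩
  set n := w.toWord.length
  have hp_le : (p : ℝ) ≤ (R : ℝ) ^ n := by
    exact_mod_cast natCast_le_pow_of_lift_modp2_eq_one ha hb hw hw_modp
  have hlog_p : 0 < Real.log p := Real.log_pos (by exact_mod_cast hp.one_lt)
  have hlog_le : Real.log p ≤ n * Real.log R := by
    rw [← Real.log_pow]
    exact Real.log_le_log (by exact_mod_cast hp.pos) hp_le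
  have hlen_log : n * Real.log R ≤ Real.log p / 2 :=
    calc n * Real.log R ≤ 1 / (2 * Real.log R) * Real.log p * Real.log R := by gcongr
      _ = Real.log p / 2 := by field_simp
  linarith
end

section
/- Let a, b be natural numbers with a ≥ 2 and b ≥ 2, and let A = [[1, a, 0], [0, 1, a], [0, 0, 1]] and B = [[1, 0, 0], [b, 1, 0], [0, b, 1]] in SL₃(ℤ). Then A⁴ and B⁴ generate a free subgroup of rank 2 of SL₃(ℤ); that is, the group homomorphism from the free group on two generators to SL₃(ℤ) sending the two generators to A⁴ and B⁴ respectively is injective. -/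
/-- `A = [[1, a, 0], [0, 1, a], [0, 0, 1]]` as an element of `SL₃(ℤ)`. -/
def A3 (a : ℕ) : Matrix.SpecialLinearGroup (Fin 3) ℤ :=
  ⟨!![1, (a : ℤ), 0; 0, 1, (a : ℤ); 0, 0, 1], by
    simp [Matrix.det_fin_three, Matrix.vecHead, Matrix.vecTail]⟩

/-- `B = [[1, 0, 0], [b, 1, 0], [0, b, 1]]` as an element of `SL₃(ℤ)`. -/
def B3 (b : ℕ) : Matrix.SpecialLinearGroup (Fin 3) ℤ :=
  ⟨!![1, 0, 0; (b : ℤ), 1, 0; 0, (b : ℤ), 1], by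
    simp [Matrix.det_fin_three, Matrix.vecHead, Matrix.vecTail]⟩

/-!
Ping-pong on `ℤ³`. The matrices `U(t, c) = [[1, t, c], [0, 1, t], [0, 0, 1]]` multiply by
`U(t, c) U(t', c') = U(t + t', c + c' + t t')`, so `(A⁴)ⁿ = U(4na, 2n(4n - 1)a²)`. For `n ≠ 0` and
`a ≥ 2` this has `|t| ≥ 3` and `|c| ≥ 3|t|`, which is enough for it to map the cone
`|z| > 2|y| > 4|x|` into the cone `|x| > 2|y| > 4|z|`. Conjugation by the antidiagonal matrix
reverses the coordinates, so it exchanges the two cones and carries `A` to `B`; hence `(B⁴)ⁿ` maps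
the second cone into the first, and the ping-pong lemma applies.
-/

open Matrix MatrixGroups Pointwise

theorem FreeGroup.injective_lift_of_zpow_ping_pong {ι G α : Type*} [Nontrivial ι] [Group G]
    [MulAction G α] (g : ι → G) (X : ι → Set α) (hX : ∀ i, (X i).Nonempty)
    (hXdisj : Pairwise fun i j => Disjoint (X i) (X j))
    (hpp : Pairwise fun i j => ∀ n : ℤ, n ≠ 0 → g i ^ n • X j ⊆ X i) :
    Function.Injective (FreeGroup.lift g) := by
  have hlift : FreeGroup.lift g =
      (Monoid.CoprodI.lift fun i => FreeGroup.lift fun _ : Unit => g i).comp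
        freeGroupEquivCoprodI.toMonoidHom := by
    ext i
    simp
  rw [hlift, MonoidHom.coe_comp]
  refine Function.Injective.comp ?_ freeGroupEquivCoprodI.injective
  refine Monoid.CoprodI.lift_injective_of_ping_pong _ ?_ X hX hXdisj ?_
  · refine Or.inr ⟨Classical.arbitrary ι, ?_⟩
    rw [FreeGroup.freeGroupUnitEquivInt.cardinal_eq, Cardinal.mk_int]
    exact Cardinal.natCast_le_aleph0
  · intro i j hij
    refine FreeGroup.freeGroupUnitEquivInt.forall_congr_left.mpr fun n hn => ?_
    have hn0 : n ≠ 0 := by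
      rintro rfl
      exact hn (by simp [FreeGroup.freeGroupUnitEquivInt])
    simpa [FreeGroup.freeGroupUnitEquivInt] using hpp hij n hn0

section CommRing

variable {R : Type*} [CommRing R]

def unipotent (t c : R) : SL(3, R) :=
  ⟨!![1, t, c; 0, 1, t; 0, 0, 1], by simp [det_fin_three]⟩

lemma unipotent_mul (t c t' c' : R) :
    unipotent t c * unipotent t' c' = unipotent (t + t') (c + c' + t * t') := by
  refine Matrix.SpecialLinearGroup.ext _ _ fun i j => ?_
  rw [Matrix.SpecialLinearGroup.coe_mul]
  fin_cases i <;> fin_cases j <;> simp [unipotent, mul_apply, Fin.sum_univ_three] <;> ring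

lemma unipotent_zero_zero : (unipotent 0 0 : SL(3, R)) = 1 := by
  refine Matrix.SpecialLinearGroup.ext _ _ fun i j => ?_
  fin_cases i <;> fin_cases j <;> simp [unipotent]

lemma unipotent_zpow_two_mul (t : R) (k : ℤ) :
    unipotent t 0 ^ (2 * k) = unipotent (2 * k * t) (k * (2 * k - 1) * t ^ 2) := by
  rw [_root_.zpow_mul, zpow_two, unipotent_mul]
  induction k using Int.induction_on with
  | zero => simpa using unipotent_zero_zero.symm
  | succ k ih =>
    rw [_root_.zpow_add_one, ih, unipotent_mul]
    congr 1 <;> push_cast <;> ring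
  | pred k ih =>
    rw [_root_.zpow_sub_one, ih, mul_inv_eq_iff_eq_mul, unipotent_mul]
    congr 1 <;> push_cast <;> ring

lemma unipotent_smul (t c : R) (v : Fin 3 → R) :
    unipotent t c • v = ![v 0 + t * v 1 + c * v 2, v 1 + t * v 2, v 2] := by
  rw [Matrix.SpecialLinearGroup.smul_def, smul_eq_mulVec]
  ext i
  fin_cases i <;> simp [unipotent, mulVec, dotProduct, Fin.sum_univ_three]

-- `-J` rather than the antidiagonal `J` itself, whose determinant is `-1`.
def reversal : SL(3, R) :=
  ⟨!![0, 0, -1; 0, -1, 0; -1, 0, 0], by simp [det_fin_three]⟩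

lemma reversal_inv : (reversal : SL(3, R))⁻¹ = reversal := by
  rw [inv_eq_iff_mul_eq_one]
  refine Matrix.SpecialLinearGroup.ext _ _ fun i j => ?_
  rw [Matrix.SpecialLinearGroup.coe_mul]
  fin_cases i <;> fin_cases j <;> simp [reversal, mul_apply, Fin.sum_univ_three]

lemma reversal_smul (v : Fin 3 → R) : (reversal : SL(3, R)) • v = ![-v 2, -v 1, -v 0] := by
  rw [Matrix.SpecialLinearGroup.smul_def, smul_eq_mulVec]
  ext i
  fin_cases i <;> simp [reversal, mulVec, dotProduct, Fin.sum_univ_three]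

end CommRing

section LinearOrder

variable {R : Type*} [CommRing R] [LinearOrder R]

def headDominant : Set (Fin 3 → R) := {v | 2 * |v 1| < |v 0| ∧ 2 * |v 2| < |v 1|}

def lastDominant : Set (Fin 3 → R) := {v | 2 * |v 1| < |v 2| ∧ 2 * |v 0| < |v 1|}

lemma disjoint_headDominant_lastDominant [IsStrictOrderedRing R] :
    Disjoint (headDominant : Set (Fin 3 → R)) lastDominant := by
  rw [Set.disjoint_left]
  rintro v ⟨h₁, h₂⟩ ⟨h₃, -⟩
  linarith [abs_nonneg (v 2)]

lemma unipotent_smul_lastDominant_subset [IsStrictOrderedRing R] {t c : R} (ht : 3 ≤ |t|)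
    (hc : 3 * |t| ≤ |c|) :
    unipotent t c • (lastDominant : Set (Fin 3 → R)) ⊆ headDominant := by
  rw [Set.smul_set_subset_iff]
  rintro v ⟨hyz, hxy⟩
  rw [unipotent_smul]
  set x := v 0
  set y := v 1
  set z := v 2
  have hmid_lower : |t| * |z| - |y| ≤ |y + t * z| := by
    simpa only [abs_mul, add_comm] using abs_sub_abs_le_abs_add (t * z) y
  have hmid_upper : |y + t * z| ≤ |y| + |t| * |z| := by
    simpa only [abs_mul] using abs_add_le y (t * z)
  have htop_lower : |c| * |z| - |t| * |y| - |x| ≤ |x + t * y + c * z| := by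
    have h₁ := abs_sub_abs_le_abs_add (c * z) (x + t * y)
    have h₂ := abs_add_le x (t * y)
    rw [abs_mul, add_comm (c * z)] at h₁
    rw [abs_mul] at h₂
    linarith
  have htz : 3 * |z| ≤ |t| * |z| := mul_le_mul_of_nonneg_right ht (abs_nonneg z)
  have hcz : 3 * |t| * |z| ≤ |c| * |z| := mul_le_mul_of_nonneg_right hc (abs_nonneg z)
  have hty : |t| * (2 * |y|) < |t| * |z| := mul_lt_mul_of_pos_left hyz (by linarith)
  have hx₀ := abs_nonneg x
  constructor <;> simp only [cons_val] <;> linarith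

lemma reversal_smul_headDominant_subset :
    (reversal : SL(3, R)) • (headDominant : Set (Fin 3 → R)) ⊆ lastDominant := by
  rw [Set.smul_set_subset_iff]
  rintro v ⟨h₁, h₂⟩
  rw [reversal_smul]
  simpa [lastDominant] using ⟨h₁, h₂⟩

end LinearOrder

lemma B3_eq_conj_A3 (b : ℕ) : B3 b = reversal * A3 b * reversal⁻¹ := by
  rw [reversal_inv]
  refine Matrix.SpecialLinearGroup.ext _ _ fun i j => ?_
  rw [Matrix.SpecialLinearGroup.coe_mul, Matrix.SpecialLinearGroup.coe_mul]
  fin_cases i <;> fin_cases j <;> simp [A3, B3, reversal, mul_apply, Fin.sum_univ_three]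

lemma headDominant_nonempty : (headDominant : Set (Fin 3 → ℤ)).Nonempty :=
  ⟨![9, 4, 1], by norm_num [headDominant, cons_val_two]⟩

lemma lastDominant_nonempty : (lastDominant : Set (Fin 3 → ℤ)).Nonempty :=
  ⟨![1, 4, 9], by norm_num [lastDominant, cons_val_two]⟩

lemma A3_eq_unipotent (a : ℕ) : A3 a = unipotent (a : ℤ) 0 := rfl

lemma A3_pow_four_zpow (a : ℕ) (n : ℤ) :
    (A3 a ^ 4) ^ n = unipotent (4 * n * a : ℤ) (2 * n * (4 * n - 1) * a ^ 2) := by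
  rw [← zpow_natCast, ← _root_.zpow_mul, A3_eq_unipotent,
    show ((4 : ℕ) : ℤ) * n = 2 * (2 * n) by push_cast; ring, unipotent_zpow_two_mul]
  congr 1 <;> push_cast <;> ring

lemma three_le_abs_four_mul {a n : ℤ} (ha : 1 ≤ a) (hn : n ≠ 0) : 3 ≤ |4 * n * a| := by
  simp only [abs_mul, abs_of_pos (by linarith : 0 < a), Nat.abs_ofNat]
  nlinarith [Int.one_le_abs hn]

lemma three_mul_abs_four_mul_le {a n : ℤ} (ha : 2 ≤ a) (hn : n ≠ 0) :
    3 * |4 * n * a| ≤ |2 * n * (4 * n - 1) * a ^ 2| := by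
  have h4n : 3 ≤ |4 * n - 1| := by
    rcases abs_cases (4 * n - 1) with ⟨h, h'⟩ | ⟨h, h'⟩ <;> omega
  have ha₀ : 0 ≤ a := by linarith
  simp only [abs_mul, abs_pow, abs_of_nonneg ha₀, Nat.abs_ofNat]
  have hna : 0 ≤ |n| * a := mul_nonneg (abs_nonneg n) ha₀
  nlinarith [mul_le_mul_of_nonneg_left (mul_le_mul h4n ha (by norm_num) (abs_nonneg _)) hna]

lemma A3_pow_four_zpow_smul_lastDominant_subset {a : ℕ} (ha : 2 ≤ a) {n : ℤ} (hn : n ≠ 0) :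
    (A3 a ^ 4) ^ n • (lastDominant : Set (Fin 3 → ℤ)) ⊆ headDominant := by
  have ha' : (2 : ℤ) ≤ a := by exact_mod_cast ha
  rw [A3_pow_four_zpow]
  exact unipotent_smul_lastDominant_subset (three_le_abs_four_mul (by linarith) hn)
    (three_mul_abs_four_mul_le ha' hn)

lemma B3_pow_four_zpow_smul_headDominant_subset {b : ℕ} (hb : 2 ≤ b) {n : ℤ} (hn : n ≠ 0) :
    (B3 b ^ 4) ^ n • (headDominant : Set (Fin 3 → ℤ)) ⊆ lastDominant := by
  rw [B3_eq_conj_A3, conj_pow, conj_zpow, reversal_inv, mul_smul, mul_smul]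
  calc reversal • (A3 b ^ 4) ^ n • reversal • headDominant
      ⊆ reversal • (A3 b ^ 4) ^ n • lastDominant :=
        Set.smul_set_mono (Set.smul_set_mono reversal_smul_headDominant_subset)
    _ ⊆ reversal • headDominant :=
        Set.smul_set_mono (A3_pow_four_zpow_smul_lastDominant_subset hb hn)
    _ ⊆ lastDominant := reversal_smul_headDominant_subset

lemma pairwise_fin_two_iff {r : Fin 2 → Fin 2 → Prop} : Pairwise r ↔ r 0 1 ∧ r 1 0 := by
  simp [Pairwise, Fin.forall_fin_two]

/-- for natural numbers `a, b ≥ 2`, the matrices `A⁴` and `B⁴` (with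
`A = [[1,a,0],[0,1,a],[0,0,1]]`, `B = [[1,0,0],[b,1,0],[0,b,1]]`) generate a free subgroup of
rank 2 of `SL₃(ℤ)`. -/
theorem sl3_free_fourth_powers (a b : ℕ) (ha : 2 ≤ a) (hb : 2 ≤ b) :
    Function.Injective ⇑(FreeGroup.lift ![(A3 a) ^ 4, (B3 b) ^ 4]) := by
  refine FreeGroup.injective_lift_of_zpow_ping_pong _ ![headDominant, lastDominant]
    (Fin.forall_fin_two.2 ⟨headDominant_nonempty, lastDominant_nonempty⟩)
    (pairwise_fin_two_iff.2
      ⟨disjoint_headDominant_lastDominant, disjoint_headDominant_lastDominant.symm⟩)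
    (pairwise_fin_two_iff.2 ⟨fun _ ↦ A3_pow_four_zpow_smul_lastDominant_subset ha,
      fun _ ↦ B3_pow_four_zpow_smul_headDominant_subset hb⟩)
end

section
/- Let n ≥ 2, and let X, Y ∈ SL_n(ℤ) be matrices that generate a free subgroup of rank 2 (i.e., the homomorphism from the free group on two generators sending the generators to X and Y is injective). Let γ ≥ 1 be a real number bounding the L∞-operator norms of X, X⁻¹, Y, and Y⁻¹ (the L∞-operator norm of a matrix M is the maximum over rows i of Σ_j |M_{ij}|). Then for every prime p and every non-identity element w of the free group on two generators whose reduced word length m satisfies γ^m < p/2, the image of w under the homomorphism to SL_n(ZMod p) sending the two generators to the mod-p reductions X_p and Y_p is not the identity. -/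
/-- The `n×n` matrix with `1`'s on the diagonal, `a` in each superdiagonal entry `(i, i+1)`,
and `0` elsewhere. -/
def upperA (R : Type*) [CommRing R] (n : ℕ) (a : R) : Matrix (Fin n) (Fin n) R :=
  Matrix.of fun i j => if (i : ℕ) = (j : ℕ) then 1 else if (j : ℕ) = (i : ℕ) + 1 then a else 0

/-- The `n×n` matrix with `1`'s on the diagonal, `b` in each subdiagonal entry `(i+1, i)`,
and `0` elsewhere. -/
def lowerB (R : Type*) [CommRing R] (n : ℕ) (b : R) : Matrix (Fin n) (Fin n) R :=
  Matrix.of fun i j => if (i : ℕ) = (j : ℕ) then 1 else if (i : ℕ) = (j : ℕ) + 1 then b else 0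

theorem upperA_det (R : Type*) [CommRing R] (n : ℕ) (a : R) : (upperA R n a).det = 1 := by
  rw [Matrix.det_of_upperTriangular]
  · simp [upperA]
  · intro i j hij
    have h : (j : ℕ) < (i : ℕ) := hij
    simp only [upperA, Matrix.of_apply]
    split_ifs with h1 h2
    · exfalso; omega
    · exfalso; omega
    · rfl

theorem lowerB_det (R : Type*) [CommRing R] (n : ℕ) (b : R) : (lowerB R n b).det = 1 := by
  rw [Matrix.det_of_lowerTriangular]
  · simp [lowerB]
  · intro i j hij
    have h : (i : ℕ) < (j : ℕ) := hij
    simp only [lowerB, Matrix.of_apply]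
    split_ifs with h1 h2
    · exfalso; omega
    · exfalso; omega
    · rfl

/-- The matrix `upperA` as an element of `SL_n(ℤ)`. -/
def Agen (n : ℕ) (a : ℤ) : Matrix.SpecialLinearGroup (Fin n) ℤ :=
  ⟨upperA ℤ n a, upperA_det ℤ n a⟩

/-- The matrix `lowerB` as an element of `SL_n(ℤ)`. -/
def Bgen (n : ℕ) (b : ℤ) : Matrix.SpecialLinearGroup (Fin n) ℤ :=
  ⟨lowerB ℤ n b, lowerB_det ℤ n b⟩

/-- Entrywise reduction modulo `p`, as a group homomorphism `SL_n(ℤ) →* SL_n(ZMod p)`. -/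
def modpn (n p : ℕ) :
    Matrix.SpecialLinearGroup (Fin n) ℤ →* Matrix.SpecialLinearGroup (Fin n) (ZMod p) :=
  Matrix.SpecialLinearGroup.map (Int.castRingHom (ZMod p))

/-! The `L∞`-operator norm on integer matrices is submultiplicative, so the integer matrix `W`
representing a reduced word of length `m` has `‖W‖ ≤ γ ^ m`. If `W` reduces to the identity
mod `p`, every entry of `W - 1` is divisible by `p` but has absolute value at most
`γ ^ m + 1 < p`, hence `W = 1`, contradicting freeness. -/

open scoped Matrix.Norms.Operator

namespace Matrix

variable {m n α : Type*}

theorem linfty_opNorm_le_iff [Fintype m] [Fintype n] [SeminormedAddCommGroup α]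
    {r : ℝ} (hr : 0 ≤ r) {A : Matrix m n α} : ‖A‖ ≤ r ↔ ∀ i, ∑ j, ‖A i j‖ ≤ r := by
  change ‖fun i => WithLp.toLp 1 (A i)‖ ≤ r ↔ _
  simp [pi_norm_le_iff_of_nonneg hr, PiLp.norm_eq_of_L1]

theorem norm_entry_le_linfty_opNorm [Fintype m] [Fintype n] [SeminormedAddCommGroup α]
    (A : Matrix m n α) (i : m) (j : n) : ‖A i j‖ ≤ ‖A‖ :=
  (Finset.single_le_sum (fun k _ => norm_nonneg (A i k)) (Finset.mem_univ j)).trans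
    ((linfty_opNorm_le_iff (norm_nonneg A)).1 le_rfl i)

theorem eq_of_map_intCast_eq {p : ℕ} {A B : Matrix m n ℤ}
    (h : A.map (Int.cast : ℤ → ZMod p) = B.map Int.cast) (hAB : ∀ i j, |A i j - B i j| < p) :
    A = B := by
  ext i j
  have hdvd : (p : ℤ) ∣ A i j - B i j := by
    have := congrFun₂ h i j
    rwa [map_apply, map_apply, ZMod.intCast_eq_intCast_iff_dvd_sub, ← dvd_neg, neg_sub] at this
  exact sub_eq_zero.1 (Int.eq_zero_of_abs_lt_dvd hdvd (hAB i j))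

theorem eq_one_of_map_intCast_eq_one [Fintype n] [DecidableEq n] {p : ℕ} {A : Matrix n n ℤ}
    (hA : ‖A‖ + 1 < p) (h : A.map (Int.cast : ℤ → ZMod p) = 1) : A = 1 := by
  refine eq_of_map_intCast_eq (by rw [h, Matrix.map_one _ Int.cast_zero Int.cast_one]) fun i j => ?_
  have hentry : ((|A i j| : ℤ) : ℝ) ≤ ‖A‖ := by
    rw [Int.cast_abs, ← Int.norm_eq_abs]
    exact norm_entry_le_linfty_opNorm A i j
  have hone : ((|(1 : Matrix n n ℤ) i j| : ℤ) : ℝ) ≤ 1 := by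
    rw [one_apply]; split_ifs <;> simp
  have hsum : ((|A i j| + |(1 : Matrix n n ℤ) i j| : ℤ) : ℝ) < p := by
    push_cast at hentry hone ⊢
    linarith
  exact (abs_sub _ _).trans_lt (by exact_mod_cast hsum)

end Matrix

theorem List.norm_prod_le_pow_length {R : Type*} [SeminormedRing R] {l : List R} (hl : l ≠ [])
    {γ : ℝ} (h : ∀ x ∈ l, ‖x‖ ≤ γ) : ‖l.prod‖ ≤ γ ^ l.length :=
  calc ‖l.prod‖ ≤ (l.map norm).prod := List.norm_prod_le' hl
    _ ≤ (l.map fun _ => γ).prod :=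
      List.prod_map_le_prod_map₀ _ _ (fun x _ => norm_nonneg x) h
    _ = γ ^ l.length := by simp

theorem FreeGroup.norm_le_pow_toWord_length {α R : Type*} [DecidableEq α] [SeminormedRing R]
    (φ : FreeGroup α →* R) {γ : ℝ} (hφ : ∀ a, ‖φ (of a)‖ ≤ γ ∧ ‖φ (of a)⁻¹‖ ≤ γ)
    {w : FreeGroup α} (hw : w ≠ 1) : ‖φ w‖ ≤ γ ^ w.toWord.length := by
  have hword : w = (w.toWord.map fun x => cond x.2 (of x.1) (of x.1)⁻¹).prod := by
    conv_lhs => rw [← mk_toWord (x := w), ← MonoidHom.id_apply _ (mk _), ← lift_of_eq_id, lift_mk]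
  calc ‖φ w‖ = ‖(w.toWord.map (φ ∘ fun x => cond x.2 (of x.1) (of x.1)⁻¹)).prod‖ := by
        rw [← List.map_map, ← map_list_prod, ← hword]
    _ ≤ γ ^ (w.toWord.map _).length := by
        refine List.norm_prod_le_pow_length (by simpa [toWord_eq_nil_iff] using hw) ?_
        simp only [List.mem_map, Function.comp_apply]
        rintro _ ⟨⟨a, _ | _⟩, _, rfl⟩
        exacts [(hφ a).2, (hφ a).1]
    _ = γ ^ w.toWord.length := by rw [List.length_map]

theorem sln_girth_from_norm_general (n : ℕ)
    (X Y : Matrix.SpecialLinearGroup (Fin n) ℤ)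
    (hfree : Function.Injective ⇑(FreeGroup.lift ![X, Y]))
    (γ : ℝ) (hγ : 1 ≤ γ)
    (hnorm : ∀ M ∈ ({X, X⁻¹, Y, Y⁻¹} : Set (Matrix.SpecialLinearGroup (Fin n) ℤ)),
      ∀ i : Fin n, (∑ j : Fin n, (|M.val i j| : ℝ)) ≤ γ) :
    ∀ p : ℕ, p.Prime → ∀ w : FreeGroup (Fin 2), w ≠ 1 →
      γ ^ (FreeGroup.toWord w).length < (p : ℝ) / 2 →
      FreeGroup.lift ![modpn n p X, modpn n p Y] w ≠ 1 := by
  intro p _ w hw hlen htrivial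
  have hgen : ∀ M ∈ ({X, X⁻¹, Y, Y⁻¹} : Set (Matrix.SpecialLinearGroup (Fin n) ℤ)),
      ‖(M : Matrix (Fin n) (Fin n) ℤ)‖ ≤ γ := fun M hM =>
    (Matrix.linfty_opNorm_le_iff (zero_le_one.trans hγ)).2 <| by
      simpa only [Int.norm_eq_abs, Int.cast_abs] using hnorm M hM
  have hWnorm : ‖(FreeGroup.lift ![X, Y] w : Matrix (Fin n) (Fin n) ℤ)‖ ≤ γ ^ w.toWord.length := by
    refine FreeGroup.norm_le_pow_toWord_length
      (Matrix.SpecialLinearGroup.coeMonoidHom.comp (FreeGroup.lift ![X, Y])) (fun a => ?_) hw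
    fin_cases a <;> constructor <;> apply hgen <;> simp
  have hreduce : FreeGroup.lift ![modpn n p X, modpn n p Y] =
      (modpn n p).comp (FreeGroup.lift ![X, Y]) :=
    FreeGroup.ext_hom _ _ fun a => by fin_cases a <;> simp
  rw [hreduce, MonoidHom.comp_apply] at htrivial
  refine hw (hfree (Subtype.ext ?_))
  rw [map_one, Matrix.SpecialLinearGroup.coe_one]
  refine Matrix.eq_one_of_map_intCast_eq_one (p := p) ?_ ?_
  · linarith [one_le_pow₀ (n := w.toWord.length) hγ]
  · simpa [modpn] using congrArg Subtype.val htrivial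

/-- let `X, Y ∈ SL_n(ℤ)` generate a free subgroup of rank 2 and let `γ ≥ 1`
bound the `L∞`-operator norms (maximum over rows of the sum of absolute values of the
entries) of `X, X⁻¹, Y, Y⁻¹`. Then for every prime `p` and every nontrivial element `w` of
the free group on two generators whose reduced word length `m` satisfies `γ^m < p/2`, the
image of `w` under the homomorphism sending the generators to the mod-`p` reductions of `X`
and `Y` is nontrivial. -/
theorem sln_girth_from_norm (n : ℕ) (hn : 2 ≤ n)
    (X Y : Matrix.SpecialLinearGroup (Fin n) ℤ)
    (hfree : Function.Injective ⇑(FreeGroup.lift ![X, Y]))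
    (γ : ℝ) (hγ : 1 ≤ γ)
    (hnorm : ∀ M ∈ ({X, X⁻¹, Y, Y⁻¹} : Set (Matrix.SpecialLinearGroup (Fin n) ℤ)),
      ∀ i : Fin n, (∑ j : Fin n, (|M.val i j| : ℝ)) ≤ γ) :
    ∀ p : ℕ, p.Prime → ∀ w : FreeGroup (Fin 2), w ≠ 1 →
      γ ^ (FreeGroup.toWord w).length < (p : ℝ) / 2 →
      FreeGroup.lift ![modpn n p X, modpn n p Y] w ≠ 1 :=
  sln_girth_from_norm_general n X Y hfree γ hγ hnorm
end
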